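/- arXiv:1312.4774 — 2 statements merged into one kernel-verified Lean document; each statement's English description precedes it below -/
import Mathlib

section
/- (Counterexample to the Wang–Sontag conjecture for n = 4) For the 4-site sequential distributive phosphorylation network there exist a rate constant vector κ ∈ ℝ_{>0}^{24} and seven pairwise distinct vectors b⁽¹⁾, …, b⁽⁷⁾ ∈ ℝ_{>0}^{15} such that S diag(κ) Φ(b⁽ʲ⁾) = 0 for all j = 1,…,7 and Z b⁽¹⁾ = Z b⁽²⁾ = ⋯ = Z b⁽⁷⁾; i.e., the 4-site system can have 7 = 2·4−1 positive steady states within one coset of the stoichiometric subspace, exceeding the conjectured bound of 5. -/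
open Finset

namespace Phos

noncomputable section

/-- Standard basis vector of `ℝ^N`, with `1`-based index `j`. -/
def e (N : ℕ) (j : ℕ) : Fin N → ℝ := fun m => if (m : ℕ) + 1 = j then 1 else 0

/-- Standard basis vector of `ℕ^N`, with `1`-based index `j`. -/
def eN (N : ℕ) (j : ℕ) : Fin N → ℕ := fun m => if (m : ℕ) + 1 = j then 1 else 0

/-- The stoichiometric matrix `S` of the `n`-site sequential distributive
phosphorylation network.  For each `i = 1,…,n` the six columns `6(i−1)+1,…,6(i−1)+6`
are `e_{1+3i}−e_1−e_{3i−1}`, `e_1+e_{3i−1}−e_{1+3i}`, `e_1+e_{2+3i}−e_{1+3i}`,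
`e_{3+3i}−e_3−e_{2+3i}`, `e_3+e_{2+3i}−e_{3+3i}`, `e_3+e_{3i−1}−e_{3+3i}`. -/
def Smat (n : ℕ) : Matrix (Fin (3*n+3)) (Fin (6*n)) ℝ :=
  Matrix.of fun m r =>
    (![e (3*n+3) (1+3*((r : ℕ)/6+1)) - e (3*n+3) 1 - e (3*n+3) (3*((r : ℕ)/6+1)-1),
       e (3*n+3) 1 + e (3*n+3) (3*((r : ℕ)/6+1)-1) - e (3*n+3) (1+3*((r : ℕ)/6+1)),
       e (3*n+3) 1 + e (3*n+3) (2+3*((r : ℕ)/6+1)) - e (3*n+3) (1+3*((r : ℕ)/6+1)),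
       e (3*n+3) (3+3*((r : ℕ)/6+1)) - e (3*n+3) 3 - e (3*n+3) (2+3*((r : ℕ)/6+1)),
       e (3*n+3) 3 + e (3*n+3) (2+3*((r : ℕ)/6+1)) - e (3*n+3) (3+3*((r : ℕ)/6+1)),
       e (3*n+3) 3 + e (3*n+3) (3*((r : ℕ)/6+1)-1) - e (3*n+3) (3+3*((r : ℕ)/6+1))])
      ⟨(r : ℕ) % 6, Nat.mod_lt _ (by norm_num)⟩ m

/-- The rate exponent matrix `Y`: for each `i = 1,…,n` the six columns
`6(i−1)+1,…,6(i−1)+6` are `e_1+e_{3i−1}`, `e_{1+3i}`, `e_{1+3i}`,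
`e_3+e_{2+3i}`, `e_{3+3i}`, `e_{3+3i}`. -/
def Ymat (n : ℕ) : Matrix (Fin (3*n+3)) (Fin (6*n)) ℕ :=
  Matrix.of fun m r =>
    (![eN (3*n+3) 1 + eN (3*n+3) (3*((r : ℕ)/6+1)-1),
       eN (3*n+3) (1+3*((r : ℕ)/6+1)),
       eN (3*n+3) (1+3*((r : ℕ)/6+1)),
       eN (3*n+3) 3 + eN (3*n+3) (2+3*((r : ℕ)/6+1)),
       eN (3*n+3) (3+3*((r : ℕ)/6+1)),
       eN (3*n+3) (3+3*((r : ℕ)/6+1))])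
      ⟨(r : ℕ) % 6, Nat.mod_lt _ (by norm_num)⟩ m

/-- The monomial map `Φ(x)_j = ∏ₘ xₘ^{Y_{mj}}`. -/
def Phi (n : ℕ) (x : Fin (3*n+3) → ℝ) : Fin (6*n) → ℝ :=
  fun r => ∏ m, x m ^ (Ymat n m r)

/-- The conservation matrix `Z` (rows `z1, z2, z3`). -/
def Zmat (n : ℕ) : Matrix (Fin 3) (Fin (3*n+3)) ℝ :=
  Matrix.of fun r j =>
    if (r : ℕ) = 0 then (if (j : ℕ) % 3 = 0 then 1 else 0)
    else if (r : ℕ) = 1 then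
      (if (j : ℕ) % 3 = 1 then 1 else if (j : ℕ) = 0 ∨ (j : ℕ) = 2 then -1 else 0)
    else (if (j : ℕ) % 3 = 2 then 1 else 0)

/-- The `6 × 3` block `E0`. -/
def E0 : Fin 6 → Fin 3 → ℝ :=
  ![![1,0,1], ![1,0,0], ![0,0,1], ![0,1,1], ![0,1,0], ![0,0,1]]

/-- The block diagonal matrix `E` with `n` copies of `E0`. -/
def Emat (n : ℕ) : Matrix (Fin (6*n)) (Fin (3*n)) ℝ :=
  Matrix.of fun r c =>
    if (r : ℕ) / 6 = (c : ℕ) / 3 then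
      E0 ⟨(r : ℕ) % 6, Nat.mod_lt _ (by norm_num)⟩ ⟨(c : ℕ) % 3, Nat.mod_lt _ (by norm_num)⟩
    else 0

/-- The matrix `L ∈ ℤ^{(3+3n)×3}`: row `1 = (1, n−1, −1)`, row `2 = (−1, −n, 0)`,
row `3 = (1, n−2, −1)`, and for `i = 1,…,n` rows `1+3i` and `3+3i` equal
`(0, i−2, −1)` while row `2+3i = (−1, i−n, 0)`. -/
def Lmat (n : ℕ) : Matrix (Fin (3*n+3)) (Fin 3) ℤ :=
  Matrix.of fun j c =>
    if (j : ℕ) = 0 then ![1, (n : ℤ) - 1, -1] c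
    else if (j : ℕ) = 1 then ![-1, -(n : ℤ), 0] c
    else if (j : ℕ) = 2 then ![1, (n : ℤ) - 2, -1] c
    else if (j : ℕ) % 3 = 1 then ![-1, (((j : ℕ) / 3 : ℕ) : ℤ) - (n : ℤ), 0] c
    else ![0, (((j : ℕ) / 3 : ℕ) : ℤ) - 2, -1] c

/-- `g^L ∈ ℝ_{>0}^{3+3n}`, `(g^L)_j = g₁^{L_{j1}} g₂^{L_{j2}} g₃^{L_{j3}}`. -/
def gL (n : ℕ) (g : Fin 3 → ℝ) : Fin (3*n+3) → ℝ :=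
  fun j => ∏ c, g c ^ (Lmat n j c)

/-- The coset condition map `Θ(g,a) = Z diag(a) (g^L − 𝟙)`. -/
def Theta (n : ℕ) (g : Fin 3 → ℝ) (a : Fin (3*n+3) → ℝ) : Fin 3 → ℝ :=
  (Zmat n).mulVec (fun j => a j * (gL n g j - 1))

/-- The rate constants `κ(a,λ)_j = (Eλ)_j / Φ(a)_j`. -/
def kappaOf (n : ℕ) (a : Fin (3*n+3) → ℝ) (lam : Fin (3*n) → ℝ) : Fin (6*n) → ℝ :=
  fun r => (Emat n).mulVec lam r / Phi n a r

/-- `x` is a (positive) steady state of `ẋ = S diag(κ) Φ(x)`. -/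
def isSteady (n : ℕ) (κ : Fin (6*n) → ℝ) (x : Fin (3*n+3) → ℝ) : Prop :=
  (Smat n).mulVec (fun r => κ r * Phi n x r) = 0

/-- The `1`-based component `a_j` of a vector `a ∈ ℝ^{3+3n}`. -/
def av (n : ℕ) (a : Fin (3*n+3) → ℝ) (j : ℕ) : ℝ :=
  if h : j - 1 < 3*n+3 then a ⟨j - 1, h⟩ else 0

/-- `ω1 = Σ_{k=0}^n a_{1+3k}`. -/
def om1 (n : ℕ) (a : Fin (3*n+3) → ℝ) : ℝ := ∑ k ∈ Finset.range (n+1), av n a (1+3*k)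

/-- `ω2 = −a₁ − a₃ + Σ_{k=0}^n a_{2+3k}`. -/
def om2 (n : ℕ) (a : Fin (3*n+3) → ℝ) : ℝ :=
  -(av n a 1) - av n a 3 + ∑ k ∈ Finset.range (n+1), av n a (2+3*k)

/-- `ω3 = Σ_{k=0}^n a_{3+3k}`. -/
def om3 (n : ℕ) (a : Fin (3*n+3) → ℝ) : ℝ := ∑ k ∈ Finset.range (n+1), av n a (3+3*k)

/-- `Ω2(ξ) = Σ_{k=0}^n a_{2+3k} ξ^k`. -/
def Om2 (n : ℕ) (a : Fin (3*n+3) → ℝ) (ξ : ℝ) : ℝ :=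
  ∑ k ∈ Finset.range (n+1), av n a (2+3*k) * ξ ^ k

/-- `Ω4(ξ) = Σ_{k=1}^n a_{1+3k} ξ^{k−1}`. -/
def Om4 (n : ℕ) (a : Fin (3*n+3) → ℝ) (ξ : ℝ) : ℝ :=
  ∑ k ∈ Finset.Icc 1 n, av n a (1+3*k) * ξ ^ (k-1)

/-- `Ω6(ξ) = Σ_{k=1}^n a_{3+3k} ξ^{k−1}`. -/
def Om6 (n : ℕ) (a : Fin (3*n+3) → ℝ) (ξ : ℝ) : ℝ :=
  ∑ k ∈ Finset.Icc 1 n, av n a (3+3*k) * ξ ^ (k-1)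

/-- `Δ(ξ) = (a₁/ω1)ξ − a₃/ω3`. -/
def Dlt (n : ℕ) (a : Fin (3*n+3) → ℝ) (ξ : ℝ) : ℝ :=
  av n a 1 / om1 n a * ξ - av n a 3 / om3 n a

/-- `ξ* = (ω1 a₃)/(a₁ ω3)`. -/
def xistar (n : ℕ) (a : Fin (3*n+3) → ℝ) : ℝ :=
  om1 n a * av n a 3 / (av n a 1 * om3 n a)

/-- `F1(ξ) = Ω6(ξ)/ω3 − Ω4(ξ)/ω1`. -/
def F1 (n : ℕ) (a : Fin (3*n+3) → ℝ) (ξ : ℝ) : ℝ :=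
  Om6 n a ξ / om3 n a - Om4 n a ξ / om1 n a

/-- `F3(ξ) = (a₁ξ/ω1)(Ω6(ξ)/ω3) − (a₃/ω3)(Ω4(ξ)/ω1)`. -/
def F3 (n : ℕ) (a : Fin (3*n+3) → ℝ) (ξ : ℝ) : ℝ :=
  av n a 1 * ξ / om1 n a * (Om6 n a ξ / om3 n a) - av n a 3 / om3 n a * (Om4 n a ξ / om1 n a)

/-- `A(ξ) = (Ω4(ξ)+Ω6(ξ))Ω2(ξ)`. -/
def Ap (n : ℕ) (a : Fin (3*n+3) → ℝ) (ξ : ℝ) : ℝ := (Om4 n a ξ + Om6 n a ξ) * Om2 n a ξ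

/-- `B(ξ) = (a₁ξ + a₃)Ω2(ξ) − ω2 ξ (Ω4(ξ)+Ω6(ξ))`. -/
def Bp (n : ℕ) (a : Fin (3*n+3) → ℝ) (ξ : ℝ) : ℝ :=
  (av n a 1 * ξ + av n a 3) * Om2 n a ξ - om2 n a * ξ * (Om4 n a ξ + Om6 n a ξ)

/-- `C(ξ) = ξ(a₁ξ + a₃)(ω1+ω2+ω3)`. -/
def Cp (n : ℕ) (a : Fin (3*n+3) → ℝ) (ξ : ℝ) : ℝ :=
  ξ * (av n a 1 * ξ + av n a 3) * (om1 n a + om2 n a + om3 n a)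

/-- `P(ξ) = A(ξ)Δ(ξ)² + B(ξ)Δ(ξ)F1(ξ) − C(ξ)F1(ξ)²`. -/
def Pp (n : ℕ) (a : Fin (3*n+3) → ℝ) (ξ : ℝ) : ℝ :=
  Ap n a ξ * (Dlt n a ξ)^2 + Bp n a ξ * Dlt n a ξ * F1 n a ξ - Cp n a ξ * (F1 n a ξ)^2

/-- `θ(ξ) = 2C(ξ)F1(ξ) − Δ(ξ)[B(ξ) + (B(ξ)² + 4A(ξ)C(ξ))^{1/2}]`. -/
def thetaFun (n : ℕ) (a : Fin (3*n+3) → ℝ) (ξ : ℝ) : ℝ :=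
  2 * Cp n a ξ * F1 n a ξ -
    Dlt n a ξ * (Bp n a ξ + Real.sqrt ((Bp n a ξ)^2 + 4 * Ap n a ξ * Cp n a ξ))

/-- `g1(ξ) = ξ^{1−n} F1(ξ)/Δ(ξ)`. -/
def g1f (n : ℕ) (a : Fin (3*n+3) → ℝ) (ξ : ℝ) : ℝ :=
  ξ ^ ((1 : ℤ) - (n : ℤ)) * F1 n a ξ / Dlt n a ξ

/-- `g3(ξ) = ξ^{−1} F3(ξ)/Δ(ξ)`. -/
def g3f (n : ℕ) (a : Fin (3*n+3) → ℝ) (ξ : ℝ) : ℝ :=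
  ξ⁻¹ * F3 n a ξ / Dlt n a ξ

/-- The candidate second steady state `b = diag(g^L) a` built from a zero `ξ`
of the determining equation, with `g = (g1(ξ), ξ, g3(ξ))`. -/
def bOf (n : ℕ) (a : Fin (3*n+3) → ℝ) (ξ : ℝ) : Fin (3*n+3) → ℝ :=
  fun j => gL n ![g1f n a ξ, ξ, g3f n a ξ] j * a j

end

end Phos

/-!
A flux vector `v` lies in the kernel of `Smat` as soon as, at every site, the binding flux of
each enzyme equals its unbinding plus catalytic flux and the two catalytic fluxes agree: `v` is
then a combination of the three elementary flux modes of the site (the columns of `Emat`), on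
which the reactions of the site cancel. For the explicit rates and states below these twelve
polynomial identities, the three conserved totals, positivity and distinctness are then exact
rational arithmetic.
-/

namespace Phos

section

variable {n : ℕ}

lemma sum_six_mul_eq_sum_sum {M : Type*} [AddCommMonoid M] (f : Fin (6*n) → M) :
    ∑ r, f r = ∑ i : Fin n, ∑ k : Fin 6, f ⟨6*i+k, by omega⟩ := by
  rw [← Fintype.sum_prod_type']
  refine (Fintype.sum_equiv (finProdFinEquiv.trans (finCongr (mul_comm n 6))) _ _ ?_).symm
  rintro ⟨i, k⟩
  congr 1
  ext
  simp only [finProdFinEquiv, Equiv.trans_apply, Equiv.coe_fn_mk, finCongr_apply, Fin.cast_mk]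
  ring

lemma Smat_apply_block (m : Fin (3*n+3)) (i : ℕ) (k : Fin 6) (h : 6*i+k < 6*n) :
    Smat n m ⟨6*i+k, h⟩ =
      (![e (3*n+3) (1+3*(i+1)) - e (3*n+3) 1 - e (3*n+3) (3*(i+1)-1),
        e (3*n+3) 1 + e (3*n+3) (3*(i+1)-1) - e (3*n+3) (1+3*(i+1)),
        e (3*n+3) 1 + e (3*n+3) (2+3*(i+1)) - e (3*n+3) (1+3*(i+1)),
        e (3*n+3) (3+3*(i+1)) - e (3*n+3) 3 - e (3*n+3) (2+3*(i+1)),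
        e (3*n+3) 3 + e (3*n+3) (2+3*(i+1)) - e (3*n+3) (3+3*(i+1)),
        e (3*n+3) 3 + e (3*n+3) (3*(i+1)-1) - e (3*n+3) (3+3*(i+1))] k) m := by
  have hdiv : (6*i+k)/6 = i := by omega
  have hmod : (⟨(6*i+k) % 6, Nat.mod_lt _ (by norm_num)⟩ : Fin 6) = k := Fin.ext (by simp)
  simp only [Smat, Matrix.of_apply, hdiv, hmod]

lemma Smat_mulVec_eq_zero_of_balanced (v : Fin (6*n) → ℝ)
    (h : ∀ i (hi : i < n), v ⟨6*i, by omega⟩ = v ⟨6*i+1, by omega⟩ + v ⟨6*i+2, by omega⟩ ∧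
      v ⟨6*i+3, by omega⟩ = v ⟨6*i+4, by omega⟩ + v ⟨6*i+5, by omega⟩ ∧
      v ⟨6*i+2, by omega⟩ = v ⟨6*i+5, by omega⟩) :
    (Smat n).mulVec v = 0 := by
  funext m
  simp only [Matrix.mulVec, dotProduct, Pi.zero_apply, sum_six_mul_eq_sum_sum, Fin.sum_univ_six,
    Smat_apply_block, Fin.coe_ofNat_eq_mod, Nat.reduceMod, add_zero, Matrix.cons_val,
    Pi.add_apply, Pi.sub_apply]
  refine Finset.sum_eq_zero fun i _ => ?_
  obtain ⟨h₀, h₃, h₅⟩ := h i i.isLt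
  rw [h₀, h₃, h₅]
  ring

lemma prod_pow_eN {N : ℕ} (x : Fin N → ℝ) (j : ℕ) (h₁ : 1 ≤ j) (h₂ : j ≤ N) :
    ∏ m, x m ^ eN N j m = x ⟨j-1, by omega⟩ := by
  rw [Finset.prod_eq_single_of_mem ⟨j-1, by omega⟩ (Finset.mem_univ _)]
  · simp only [eN, pow_ite, pow_one, pow_zero, ite_eq_left_iff]
    omega
  · intro m _ hm
    have : (m : ℕ) + 1 ≠ j := fun h => hm (Fin.ext (by simp; omega))
    simp [eN, this]

lemma Phi_apply_block (x : Fin (3*n+3) → ℝ) (i : ℕ) (k : Fin 6) (h : 6*i+k < 6*n) :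
    Phi n x ⟨6*i+k, h⟩ =
      ![x ⟨0, by omega⟩ * x ⟨3*i+1, by omega⟩, x ⟨3*i+3, by omega⟩, x ⟨3*i+3, by omega⟩,
        x ⟨2, by omega⟩ * x ⟨3*i+4, by omega⟩, x ⟨3*i+5, by omega⟩, x ⟨3*i+5, by omega⟩] k := by
  have hdiv : (6*i+k)/6 = i := by omega
  have hmod : (⟨(6*i+k) % 6, Nat.mod_lt _ (by norm_num)⟩ : Fin 6) = k := Fin.ext (by simp)
  simp only [Phi, Ymat, Matrix.of_apply, hdiv, hmod]
  fin_cases k <;>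
    simp only [Fin.zero_eta, Fin.mk_one, Fin.reduceFinMk, Matrix.cons_val, Pi.add_apply, pow_add,
      Finset.prod_mul_distrib] <;>
    repeat rw [prod_pow_eN]
  all_goals first | omega | (congr <;> omega)

theorem isSteady_of_balanced (κ : Fin (6*n) → ℝ) (x : Fin (3*n+3) → ℝ)
    (h : ∀ i (hi : i < n),
      κ ⟨6*i, by omega⟩ * (x ⟨0, by omega⟩ * x ⟨3*i+1, by omega⟩) =
          (κ ⟨6*i+1, by omega⟩ + κ ⟨6*i+2, by omega⟩) * x ⟨3*i+3, by omega⟩ ∧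
        κ ⟨6*i+3, by omega⟩ * (x ⟨2, by omega⟩ * x ⟨3*i+4, by omega⟩) =
          (κ ⟨6*i+4, by omega⟩ + κ ⟨6*i+5, by omega⟩) * x ⟨3*i+5, by omega⟩ ∧
        κ ⟨6*i+2, by omega⟩ * x ⟨3*i+3, by omega⟩ = κ ⟨6*i+5, by omega⟩ * x ⟨3*i+5, by omega⟩) :
    isSteady n κ x := by
  refine Smat_mulVec_eq_zero_of_balanced _ fun i hi => ?_
  have Φ₀ : Phi n x ⟨6*i, by omega⟩ = x ⟨0, by omega⟩ * x ⟨3*i+1, by omega⟩ :=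
    Phi_apply_block x i 0 (by omega)
  have Φ₁ : Phi n x ⟨6*i+1, by omega⟩ = x ⟨3*i+3, by omega⟩ := Phi_apply_block x i 1 (by omega)
  have Φ₂ : Phi n x ⟨6*i+2, by omega⟩ = x ⟨3*i+3, by omega⟩ := Phi_apply_block x i 2 (by omega)
  have Φ₃ : Phi n x ⟨6*i+3, by omega⟩ = x ⟨2, by omega⟩ * x ⟨3*i+4, by omega⟩ :=
    Phi_apply_block x i 3 (by omega)
  have Φ₄ : Phi n x ⟨6*i+4, by omega⟩ = x ⟨3*i+5, by omega⟩ := Phi_apply_block x i 4 (by omega)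
  have Φ₅ : Phi n x ⟨6*i+5, by omega⟩ = x ⟨3*i+5, by omega⟩ := Phi_apply_block x i 5 (by omega)
  rw [Φ₀, Φ₁, Φ₂, Φ₃, Φ₄, Φ₅, ← add_mul, ← add_mul]
  exact h i hi

end

lemma Zmat_four_mulVec (x : Fin (3*4+3) → ℝ) : (Zmat 4).mulVec x =
    ![x 0 + x 3 + x 6 + x 9 + x 12, x 1 + x 4 + x 7 + x 10 + x 13 - x 0 - x 2,
      x 2 + x 5 + x 8 + x 11 + x 14] := by
  ext c
  fin_cases c <;> simp [Matrix.mulVec, dotProduct, Fin.sum_univ_succ, Zmat] <;> ring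

noncomputable section

def rates : Fin (6*4) → ℝ :=
  ![9, 1, 4/5, 540/439, 1, 1,
    1215/1756, 1, 1/8, 540/162701, 1, 1,
    2430/162701, 1, 8, 540/439, 1, 1,
    1215/878, 1, 5/4, 10, 1, 1]

/- Steady states depend on `rates` only through the Michaelis constants `κ₀/(κ₁+κ₂)`,
`κ₃/(κ₄+κ₅)` and the ratios `κ₂/κ₅` of each site, and this family of constants is unchanged when
kinase and phosphatase are exchanged and the order of the sites is reversed. That exchange is
`mirror`, so it maps steady states to steady states and, the two enzyme totals being equal, it
fixes the coset. -/
def mirror (x : Fin (3*4+3) → ℝ) : Fin (3*4+3) → ℝ :=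
  ![x 2, x 13, x 0, x 14, x 10, x 12, x 11, x 7, x 9, x 8, x 4, x 6, x 5, x 1, x 3]

def state₀ : Fin (3*4+3) → ℝ :=
  ![233285/11664, 2/485, 46657/11664, 2405/5832, 1756/13095, 481/1458, 2405/1458,
    162701/5238, 2405/11664, 12025/11664, 8780/2619, 12025/1458, 60125/1458, 250/97,
    300625/5832]

def state₁ : Fin (3*4+3) → ℝ :=
  ![10816/567, 1/384, 5408/1701, 845/3402, 439/4320, 338/1701, 676/567, 162701/5760,
    169/1134, 169/189, 439/120, 1352/189, 2704/63, 27/8, 3380/63]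

def state₂ : Fin (3*4+3) → ℝ :=
  ![194324/10935, 1/808, 48581/21870, 481/4374, 878/13635, 962/10935, 7696/10935,
    325402/13635, 962/10935, 7696/10935, 56192/13635, 61568/10935, 492544/10935, 512/101,
    123136/2187]

def stateSymm : Fin (3*4+3) → ℝ :=
  ![4810/243, 1/6, 4810/243, 12025/729, 439/405, 9620/729, 9620/729, 162701/3240,
    2405/1458, 2405/1458, 439/405, 9620/729, 9620/729, 1/6, 12025/729]

def states : Fin 7 → Fin (3*4+3) → ℝ :=
  ![state₀, state₁, state₂, stateSymm, mirror state₀, mirror state₁, mirror state₂]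

end

lemma rates_pos (r : Fin (6*4)) : 0 < rates r := by
  fin_cases r <;> norm_num [rates]

lemma states_pos (j : Fin 7) (m : Fin (3*4+3)) : 0 < states j m := by
  fin_cases j <;> fin_cases m <;>
    simp only [states, mirror, state₀, state₁, state₂, stateSymm, Nat.reduceMul, Nat.reduceAdd,
      Fin.isValue, Fin.reduceFinMk, Matrix.cons_val] <;>
    norm_num

lemma states_injective : Function.Injective states := by
  intro j j' h
  have h₀ := congrFun h 0
  fin_cases j <;> fin_cases j' <;>
    simp only [states, mirror, state₀, state₁, state₂, stateSymm, Nat.reduceMul, Nat.reduceAdd,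
      Fin.isValue, Fin.reduceFinMk, Matrix.cons_val] at h₀ ⊢ <;>
    norm_num at h₀

lemma isSteady_states (j : Fin 7) : isSteady 4 rates (states j) := by
  refine isSteady_of_balanced _ _ fun i hi => ?_
  fin_cases j <;> interval_cases i <;>
    simp only [states, rates, mirror, state₀, state₁, state₂, stateSymm, Nat.reduceMul,
      Nat.reduceAdd, Fin.isValue, Fin.reduceFinMk, Matrix.cons_val] <;>
    norm_num

lemma Zmat_mulVec_states (j : Fin 7) :
    (Zmat 4).mulVec (states j) = ![31265/486, 25523/1944, 31265/486] := by
  rw [Zmat_four_mulVec]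
  fin_cases j <;>
    simp only [states, mirror, state₀, state₁, state₂, stateSymm, Nat.reduceMul, Nat.reduceAdd,
      Fin.isValue, Fin.reduceFinMk, Matrix.cons_val] <;>
    norm_num

/-- (Counterexample to the Wang–Sontag conjecture for `n = 4`.)
There exist rate constants `κ ∈ ℝ_{>0}^{24}` and seven pairwise distinct positive
steady states of the 4-site system lying in one coset of the stoichiometric
subspace. -/
theorem four_site_seven_steady_states :
    ∃ (κ : Fin (6*4) → ℝ) (b : Fin 7 → Fin (3*4+3) → ℝ),
      (∀ r, 0 < κ r) ∧
      (∀ j i, 0 < b j i) ∧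
      (∀ j j' : Fin 7, j ≠ j' → b j ≠ b j') ∧
      (∀ j, isSteady 4 κ (b j)) ∧
      (∀ j j' : Fin 7, (Zmat 4).mulVec (b j) = (Zmat 4).mulVec (b j')) :=
  ⟨rates, states, rates_pos, states_pos, fun _ _ => states_injective.ne, isSteady_states,
    fun j j' => (Zmat_mulVec_states j).trans (Zmat_mulVec_states j').symm⟩

end Phos
end

section
/- (Collinearity of relative steady states — graphical test for the coset condition) Let κ ∈ ℝ_{>0}^{6n} and let a, b ∈ ℝ_{>0}^{3+3n} be two positive steady states of ẋ = S diag(κ) Φ(x) with Z(b − a) = 0. Set ξ := (b_1/a_1)/(b_3/a_3). Then b_{3i+2}/b_{3i−1} = ξ · a_{3i+2}/a_{3i−1} for all i = 1,…,n, and b_{3i+1}/b_{3i−2} = ξ · a_{3i+1}/a_{3i−2} and b_{3i+3}/b_{3i} = ξ · a_{3i+3}/a_{3i} for all i = 2,…,n. In particular, the n points (a_{3i+2}/a_{3i−1}, b_{3i+2}/b_{3i−1}), i = 1,…,n, formed from the consecutive phosphoform ratios of the two steady states, all lie on the line through the origin with slope ξ. -/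
open Finset

namespace Phos

private lemma eN_prod (n : ℕ) (x : Fin (3*n+3) → ℝ) (j : ℕ) (h1 : 1 ≤ j) (h2 : j ≤ 3*n+3) :
    (∏ m, x m ^ eN (3*n+3) j m) = x ⟨j-1, by omega⟩ := by
  rw [Finset.prod_eq_single (⟨j-1, by omega⟩ : Fin (3*n+3))]
  · have h : ((⟨j-1, by omega⟩ : Fin (3*n+3)) : ℕ) + 1 = j := by
      show j - 1 + 1 = j; omega
    simp [eN, h]
  · intro m _ hm
    have h : ¬ ((m:ℕ) + 1 = j) := by
      intro hc
      exact hm (Fin.ext (by show (m:ℕ) = j-1; omega))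
    simp [eN, h]
  · intro h; exact absurd (Finset.mem_univ _) h

private lemma eN_prod2 (n : ℕ) (x : Fin (3*n+3) → ℝ) (j k : ℕ)
    (h1 : 1 ≤ j) (h2 : j ≤ 3*n+3) (h3 : 1 ≤ k) (h4 : k ≤ 3*n+3) :
    (∏ m, x m ^ (eN (3*n+3) j m + eN (3*n+3) k m)) = x ⟨j-1, by omega⟩ * x ⟨k-1, by omega⟩ := by
  have : ∀ m : Fin (3*n+3), x m ^ (eN (3*n+3) j m + eN (3*n+3) k m)
      = x m ^ eN (3*n+3) j m * x m ^ eN (3*n+3) k m := fun m => pow_add _ _ _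
  rw [Finset.prod_congr rfl fun m _ => this m, Finset.prod_mul_distrib,
      eN_prod n x j h1 h2, eN_prod n x k h3 h4]

private lemma Phi0 (n t : ℕ) (ht : t < n) (x : Fin (3*n+3) → ℝ) :
    Phi n x ⟨6*t, by omega⟩ = x ⟨0, by omega⟩ * x ⟨3*t+1, by omega⟩ := by
  have h6 : (6*t) % 6 = 0 := by omega
  have h7 : (6*t) / 6 = t := by omega
  have hY : ∀ m : Fin (3*n+3), Ymat n m ⟨6*t, by omega⟩
      = eN (3*n+3) 1 m + eN (3*n+3) (3*t+2) m := by
    intro m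
    simp only [Ymat, Matrix.of_apply, h6, h7]
    show (eN (3*n+3) 1 + eN (3*n+3) (3*(t+1)-1)) m = _
    rw [show 3*(t+1)-1 = 3*t+2 from by omega]
    rfl
  simp only [Phi, hY]
  have := eN_prod2 n x 1 (3*t+2) (by omega) (by omega) (by omega) (by omega)
  rw [this]; rfl

private lemma Phi1 (n t : ℕ) (ht : t < n) (x : Fin (3*n+3) → ℝ) :
    Phi n x ⟨6*t+1, by omega⟩ = x ⟨3*t+3, by omega⟩ := by
  have h6 : (6*t+1) % 6 = 1 := by omega
  have h7 : (6*t+1) / 6 = t := by omega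
  have hY : ∀ m : Fin (3*n+3), Ymat n m ⟨6*t+1, by omega⟩ = eN (3*n+3) (3*t+4) m := by
    intro m
    simp only [Ymat, Matrix.of_apply, h6, h7]
    show eN (3*n+3) (1+3*(t+1)) m = _
    rw [show 1+3*(t+1) = 3*t+4 from by omega]
  simp only [Phi, hY]
  exact eN_prod n x (3*t+4) (by omega) (by omega)

private lemma Phi2 (n t : ℕ) (ht : t < n) (x : Fin (3*n+3) → ℝ) :
    Phi n x ⟨6*t+2, by omega⟩ = x ⟨3*t+3, by omega⟩ := by
  have h6 : (6*t+2) % 6 = 2 := by omega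
  have h7 : (6*t+2) / 6 = t := by omega
  have hY : ∀ m : Fin (3*n+3), Ymat n m ⟨6*t+2, by omega⟩ = eN (3*n+3) (3*t+4) m := by
    intro m
    simp only [Ymat, Matrix.of_apply, h6, h7]
    show eN (3*n+3) (1+3*(t+1)) m = _
    rw [show 1+3*(t+1) = 3*t+4 from by omega]
  simp only [Phi, hY]
  exact eN_prod n x (3*t+4) (by omega) (by omega)

private lemma Phi3 (n t : ℕ) (ht : t < n) (x : Fin (3*n+3) → ℝ) :
    Phi n x ⟨6*t+3, by omega⟩ = x ⟨2, by omega⟩ * x ⟨3*t+4, by omega⟩ := by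
  have h6 : (6*t+3) % 6 = 3 := by omega
  have h7 : (6*t+3) / 6 = t := by omega
  have hY : ∀ m : Fin (3*n+3), Ymat n m ⟨6*t+3, by omega⟩
      = eN (3*n+3) 3 m + eN (3*n+3) (3*t+5) m := by
    intro m
    simp only [Ymat, Matrix.of_apply, h6, h7]
    show (eN (3*n+3) 3 + eN (3*n+3) (2+3*(t+1))) m = _
    rw [show 2+3*(t+1) = 3*t+5 from by omega]
    rfl
  simp only [Phi, hY]
  have := eN_prod2 n x 3 (3*t+5) (by omega) (by omega) (by omega) (by omega)
  rw [this]; rfl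

private lemma Phi4 (n t : ℕ) (ht : t < n) (x : Fin (3*n+3) → ℝ) :
    Phi n x ⟨6*t+4, by omega⟩ = x ⟨3*t+5, by omega⟩ := by
  have h6 : (6*t+4) % 6 = 4 := by omega
  have h7 : (6*t+4) / 6 = t := by omega
  have hY : ∀ m : Fin (3*n+3), Ymat n m ⟨6*t+4, by omega⟩ = eN (3*n+3) (3*t+6) m := by
    intro m
    simp only [Ymat, Matrix.of_apply, h6, h7]
    show eN (3*n+3) (3+3*(t+1)) m = _
    rw [show 3+3*(t+1) = 3*t+6 from by omega]
  simp only [Phi, hY]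
  exact eN_prod n x (3*t+6) (by omega) (by omega)

private lemma Phi5 (n t : ℕ) (ht : t < n) (x : Fin (3*n+3) → ℝ) :
    Phi n x ⟨6*t+5, by omega⟩ = x ⟨3*t+5, by omega⟩ := by
  have h6 : (6*t+5) % 6 = 5 := by omega
  have h7 : (6*t+5) / 6 = t := by omega
  have hY : ∀ m : Fin (3*n+3), Ymat n m ⟨6*t+5, by omega⟩ = eN (3*n+3) (3*t+6) m := by
    intro m
    simp only [Ymat, Matrix.of_apply, h6, h7]
    show eN (3*n+3) (3+3*(t+1)) m = _
    rw [show 3+3*(t+1) = 3*t+6 from by omega]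
  simp only [Phi, hY]
  exact eN_prod n x (3*t+6) (by omega) (by omega)

private lemma Smat0 (n t : ℕ) (ht : t < n) (m : Fin (3*n+3)) :
    Smat n m ⟨6*t, by omega⟩ =
      (if (m:ℕ)+1 = 3*t+4 then (1:ℝ) else 0) - (if (m:ℕ)+1 = 1 then 1 else 0)
        - (if (m:ℕ)+1 = 3*t+2 then 1 else 0) := by
  have h6 : (6*t) % 6 = 0 := by omega
  have h7 : (6*t) / 6 = t := by omega
  simp only [Smat, Matrix.of_apply, h6, h7]
  show (e (3*n+3) (1+3*(t+1)) - e (3*n+3) 1 - e (3*n+3) (3*(t+1)-1)) m = _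
  rw [show 1+3*(t+1) = 3*t+4 from by omega, show 3*(t+1)-1 = 3*t+2 from by omega]
  rfl

private lemma Smat1 (n t : ℕ) (ht : t < n) (m : Fin (3*n+3)) :
    Smat n m ⟨6*t+1, by omega⟩ =
      (if (m:ℕ)+1 = 1 then (1:ℝ) else 0) + (if (m:ℕ)+1 = 3*t+2 then 1 else 0)
        - (if (m:ℕ)+1 = 3*t+4 then 1 else 0) := by
  have h6 : (6*t+1) % 6 = 1 := by omega
  have h7 : (6*t+1) / 6 = t := by omega
  simp only [Smat, Matrix.of_apply, h6, h7]
  show (e (3*n+3) 1 + e (3*n+3) (3*(t+1)-1) - e (3*n+3) (1+3*(t+1))) m = _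
  rw [show 1+3*(t+1) = 3*t+4 from by omega, show 3*(t+1)-1 = 3*t+2 from by omega]
  rfl

private lemma Smat2 (n t : ℕ) (ht : t < n) (m : Fin (3*n+3)) :
    Smat n m ⟨6*t+2, by omega⟩ =
      (if (m:ℕ)+1 = 1 then (1:ℝ) else 0) + (if (m:ℕ)+1 = 3*t+5 then 1 else 0)
        - (if (m:ℕ)+1 = 3*t+4 then 1 else 0) := by
  have h6 : (6*t+2) % 6 = 2 := by omega
  have h7 : (6*t+2) / 6 = t := by omega
  simp only [Smat, Matrix.of_apply, h6, h7]
  show (e (3*n+3) 1 + e (3*n+3) (2+3*(t+1)) - e (3*n+3) (1+3*(t+1))) m = _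
  rw [show 1+3*(t+1) = 3*t+4 from by omega, show 2+3*(t+1) = 3*t+5 from by omega]
  rfl

private lemma Smat3 (n t : ℕ) (ht : t < n) (m : Fin (3*n+3)) :
    Smat n m ⟨6*t+3, by omega⟩ =
      (if (m:ℕ)+1 = 3*t+6 then (1:ℝ) else 0) - (if (m:ℕ)+1 = 3 then 1 else 0)
        - (if (m:ℕ)+1 = 3*t+5 then 1 else 0) := by
  have h6 : (6*t+3) % 6 = 3 := by omega
  have h7 : (6*t+3) / 6 = t := by omega
  simp only [Smat, Matrix.of_apply, h6, h7]
  show (e (3*n+3) (3+3*(t+1)) - e (3*n+3) 3 - e (3*n+3) (2+3*(t+1))) m = _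
  rw [show 3+3*(t+1) = 3*t+6 from by omega, show 2+3*(t+1) = 3*t+5 from by omega]
  rfl

private lemma Smat4 (n t : ℕ) (ht : t < n) (m : Fin (3*n+3)) :
    Smat n m ⟨6*t+4, by omega⟩ =
      (if (m:ℕ)+1 = 3 then (1:ℝ) else 0) + (if (m:ℕ)+1 = 3*t+5 then 1 else 0)
        - (if (m:ℕ)+1 = 3*t+6 then 1 else 0) := by
  have h6 : (6*t+4) % 6 = 4 := by omega
  have h7 : (6*t+4) / 6 = t := by omega
  simp only [Smat, Matrix.of_apply, h6, h7]
  show (e (3*n+3) 3 + e (3*n+3) (2+3*(t+1)) - e (3*n+3) (3+3*(t+1))) m = _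
  rw [show 3+3*(t+1) = 3*t+6 from by omega, show 2+3*(t+1) = 3*t+5 from by omega]
  rfl

private lemma Smat5 (n t : ℕ) (ht : t < n) (m : Fin (3*n+3)) :
    Smat n m ⟨6*t+5, by omega⟩ =
      (if (m:ℕ)+1 = 3 then (1:ℝ) else 0) + (if (m:ℕ)+1 = 3*t+2 then 1 else 0)
        - (if (m:ℕ)+1 = 3*t+6 then 1 else 0) := by
  have h6 : (6*t+5) % 6 = 5 := by omega
  have h7 : (6*t+5) / 6 = t := by omega
  simp only [Smat, Matrix.of_apply, h6, h7]
  show (e (3*n+3) 3 + e (3*n+3) (3*(t+1)-1) - e (3*n+3) (3+3*(t+1))) m = _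
  rw [show 3+3*(t+1) = 3*t+6 from by omega, show 3*(t+1)-1 = 3*t+2 from by omega]
  rfl

private def W (n : ℕ) (v : Fin (6*n) → ℝ) (r : ℕ) : ℝ :=
  if h : r < 6*n then v ⟨r, h⟩ else 0

private lemma W_lt (n : ℕ) (v : Fin (6*n) → ℝ) (r : ℕ) (h : r < 6*n) :
    W n v r = v ⟨r, h⟩ := dif_pos h

private lemma sum_blocks (n : ℕ) (f : ℕ → ℝ) :
    ∑ r ∈ Finset.range (6*n), f r
      = ∑ t ∈ Finset.range n,
          (f (6*t) + f (6*t+1) + f (6*t+2) + f (6*t+3) + f (6*t+4) + f (6*t+5)) := by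
  induction n with
  | zero => simp
  | succ n ih =>
      rw [Finset.sum_range_succ, ← ih,
          show 6*(n+1) = (6*n+4+1)+1 from by ring, Finset.sum_range_succ,
          Finset.sum_range_succ,
          show 6*n+4 = (6*n+2+1)+1 from by ring, Finset.sum_range_succ,
          Finset.sum_range_succ,
          show 6*n+2 = (6*n+1)+1 from by ring, Finset.sum_range_succ,
          Finset.sum_range_succ]
      ring_nf

private lemma row_eval (n : ℕ) (v : Fin (6*n) → ℝ) (m : Fin (3*n+3)) :
    (Smat n).mulVec v m
      = ∑ t ∈ Finset.range n,
          (((if (m:ℕ)+1 = 3*t+4 then (1:ℝ) else 0) - (if (m:ℕ)+1 = 1 then 1 else 0)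
              - (if (m:ℕ)+1 = 3*t+2 then 1 else 0)) * W n v (6*t)
          + ((if (m:ℕ)+1 = 1 then (1:ℝ) else 0) + (if (m:ℕ)+1 = 3*t+2 then 1 else 0)
              - (if (m:ℕ)+1 = 3*t+4 then 1 else 0)) * W n v (6*t+1)
          + ((if (m:ℕ)+1 = 1 then (1:ℝ) else 0) + (if (m:ℕ)+1 = 3*t+5 then 1 else 0)
              - (if (m:ℕ)+1 = 3*t+4 then 1 else 0)) * W n v (6*t+2)
          + ((if (m:ℕ)+1 = 3*t+6 then (1:ℝ) else 0) - (if (m:ℕ)+1 = 3 then 1 else 0)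
              - (if (m:ℕ)+1 = 3*t+5 then 1 else 0)) * W n v (6*t+3)
          + ((if (m:ℕ)+1 = 3 then (1:ℝ) else 0) + (if (m:ℕ)+1 = 3*t+5 then 1 else 0)
              - (if (m:ℕ)+1 = 3*t+6 then 1 else 0)) * W n v (6*t+4)
          + ((if (m:ℕ)+1 = 3 then (1:ℝ) else 0) + (if (m:ℕ)+1 = 3*t+2 then 1 else 0)
              - (if (m:ℕ)+1 = 3*t+6 then 1 else 0)) * W n v (6*t+5)) := by
  have h1 : (Smat n).mulVec v m = ∑ r : Fin (6*n), Smat n m r * v r := rfl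
  have h2 : ∑ r : Fin (6*n), Smat n m r * v r
      = ∑ r ∈ Finset.range (6*n),
          (fun r : ℕ => if h : r < 6*n then Smat n m ⟨r,h⟩ * v ⟨r,h⟩ else 0) r := by
    rw [Finset.sum_range]
    refine Finset.sum_congr rfl fun r _ => ?_
    rw [dif_pos r.isLt]
  rw [h1, h2, sum_blocks]
  refine Finset.sum_congr rfl fun t htm => ?_
  have ht : t < n := Finset.mem_range.mp htm
  rw [dif_pos (show 6*t < 6*n by omega), dif_pos (show 6*t+1 < 6*n by omega),
      dif_pos (show 6*t+2 < 6*n by omega), dif_pos (show 6*t+3 < 6*n by omega),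
      dif_pos (show 6*t+4 < 6*n by omega), dif_pos (show 6*t+5 < 6*n by omega),
      Smat0 n t ht m, Smat1 n t ht m, Smat2 n t ht m, Smat3 n t ht m,
      Smat4 n t ht m, Smat5 n t ht m,
      W_lt n v (6*t) (by omega), W_lt n v (6*t+1) (by omega),
      W_lt n v (6*t+2) (by omega), W_lt n v (6*t+3) (by omega),
      W_lt n v (6*t+4) (by omega), W_lt n v (6*t+5) (by omega)]

set_option maxHeartbeats 1000000 in
private lemma ES_row (n : ℕ) (v : Fin (6*n) → ℝ) (hv : (Smat n).mulVec v = 0)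
    (t : ℕ) (ht : t < n) :
    W n v (6*t) = W n v (6*t+1) + W n v (6*t+2) := by
  have h0 := congrFun hv ⟨3*t+3, by omega⟩
  rw [row_eval] at h0
  have hm : ((⟨3*t+3, by omega⟩ : Fin (3*n+3)) : ℕ) = 3*t+3 := rfl
  rw [hm] at h0
  rw [Finset.sum_congr rfl (fun t' ht' => show _ = if t' = t then
      W n v (6*t') - W n v (6*t'+1) - W n v (6*t'+2) else 0 from by
    split_ifs <;> first | (exfalso; omega) | ring1),
    Finset.sum_ite_eq' (Finset.range n) t
      (fun t' => W n v (6*t') - W n v (6*t'+1) - W n v (6*t'+2)),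
    if_pos (Finset.mem_range.mpr ht)] at h0
  have : (0 : Fin (3*n+3) → ℝ) ⟨3*t+3, by omega⟩ = 0 := rfl
  rw [this] at h0
  linarith

set_option maxHeartbeats 1000000 in
private lemma FS_row (n : ℕ) (v : Fin (6*n) → ℝ) (hv : (Smat n).mulVec v = 0)
    (t : ℕ) (ht : t < n) :
    W n v (6*t+3) = W n v (6*t+4) + W n v (6*t+5) := by
  have h0 := congrFun hv ⟨3*t+5, by omega⟩
  rw [row_eval] at h0
  have hm : ((⟨3*t+5, by omega⟩ : Fin (3*n+3)) : ℕ) = 3*t+5 := rfl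
  rw [hm] at h0
  rw [Finset.sum_congr rfl (fun t' ht' => show _ = if t' = t then
      W n v (6*t'+3) - W n v (6*t'+4) - W n v (6*t'+5) else 0 from by
    split_ifs <;> first | (exfalso; omega) | ring1),
    Finset.sum_ite_eq' (Finset.range n) t
      (fun t' => W n v (6*t'+3) - W n v (6*t'+4) - W n v (6*t'+5)),
    if_pos (Finset.mem_range.mpr ht)] at h0
  have : (0 : Fin (3*n+3) → ℝ) ⟨3*t+5, by omega⟩ = 0 := rfl
  rw [this] at h0
  linarith

set_option maxHeartbeats 1000000 in
private lemma A0_row (n : ℕ) (v : Fin (6*n) → ℝ) (hv : (Smat n).mulVec v = 0)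
    (hn : 0 < n) :
    W n v 1 + W n v 5 = W n v 0 := by
  have h0 := congrFun hv ⟨1, by omega⟩
  rw [row_eval] at h0
  have hm : ((⟨1, by omega⟩ : Fin (3*n+3)) : ℕ) = 1 := rfl
  rw [hm] at h0
  rw [Finset.sum_congr rfl (fun t' ht' => show _ = if t' = 0 then
      W n v (6*t'+1) + W n v (6*t'+5) - W n v (6*t') else 0 from by
    split_ifs <;> first | (exfalso; omega) | ring1),
    Finset.sum_ite_eq' (Finset.range n) 0
      (fun t' => W n v (6*t'+1) + W n v (6*t'+5) - W n v (6*t')),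
    if_pos (Finset.mem_range.mpr hn)] at h0
  have : (0 : Fin (3*n+3) → ℝ) ⟨1, by omega⟩ = 0 := rfl
  rw [this] at h0
  simp only [Nat.mul_zero, Nat.zero_add] at h0
  linarith

set_option maxHeartbeats 1000000 in
private lemma An_row (n : ℕ) (v : Fin (6*n) → ℝ) (hv : (Smat n).mulVec v = 0)
    (hn : 0 < n) :
    W n v (6*(n-1)+2) + W n v (6*(n-1)+4) = W n v (6*(n-1)+3) := by
  have h0 := congrFun hv ⟨3*n+1, by omega⟩
  rw [row_eval] at h0
  have hm : ((⟨3*n+1, by omega⟩ : Fin (3*n+3)) : ℕ) = 3*n+1 := rfl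
  rw [hm] at h0
  rw [Finset.sum_congr rfl (fun t' ht' => show _ = if t' = n-1 then
      W n v (6*t'+2) + W n v (6*t'+4) - W n v (6*t'+3) else 0 from by
    have := Finset.mem_range.mp ht'
    split_ifs <;> first | (exfalso; omega) | ring1),
    Finset.sum_ite_eq' (Finset.range n) (n-1)
      (fun t' => W n v (6*t'+2) + W n v (6*t'+4) - W n v (6*t'+3)),
    if_pos (Finset.mem_range.mpr (by omega))] at h0
  have : (0 : Fin (3*n+3) → ℝ) ⟨3*n+1, by omega⟩ = 0 := rfl
  rw [this] at h0
  linarith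

set_option maxHeartbeats 1000000 in
private lemma Amid_row (n : ℕ) (v : Fin (6*n) → ℝ) (hv : (Smat n).mulVec v = 0)
    (t : ℕ) (h1 : 1 ≤ t) (ht : t < n) :
    W n v (6*t+1) + W n v (6*t+5) + (W n v (6*(t-1)+2) + W n v (6*(t-1)+4))
      = W n v (6*t) + W n v (6*(t-1)+3) := by
  have h0 := congrFun hv ⟨3*t+1, by omega⟩
  rw [row_eval] at h0
  have hm : ((⟨3*t+1, by omega⟩ : Fin (3*n+3)) : ℕ) = 3*t+1 := rfl
  rw [hm] at h0
  rw [Finset.sum_congr rfl (fun t' ht' => show _ =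
      (if t' = t then W n v (6*t'+1) + W n v (6*t'+5) - W n v (6*t') else 0)
      + (if t' = t-1 then W n v (6*t'+2) + W n v (6*t'+4) - W n v (6*t'+3) else 0) from by
    split_ifs <;> first | (exfalso; omega) | ring1),
    Finset.sum_add_distrib,
    Finset.sum_ite_eq' (Finset.range n) t
      (fun t' => W n v (6*t'+1) + W n v (6*t'+5) - W n v (6*t')),
    Finset.sum_ite_eq' (Finset.range n) (t-1)
      (fun t' => W n v (6*t'+2) + W n v (6*t'+4) - W n v (6*t'+3)),
    if_pos (Finset.mem_range.mpr ht), if_pos (Finset.mem_range.mpr (by omega))] at h0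
  have : (0 : Fin (3*n+3) → ℝ) ⟨3*t+1, by omega⟩ = 0 := rfl
  rw [this] at h0
  linarith

private lemma flux_zero (n : ℕ) (v : Fin (6*n) → ℝ) (hv : (Smat n).mulVec v = 0) :
    ∀ t, t < n → W n v (6*t+2) = W n v (6*t+5) := by
  have main : ∀ d t, t < n → n - 1 - t = d → W n v (6*t+2) = W n v (6*t+5) := by
    intro d
    induction d with
    | zero =>
        intro t ht h0
        have htn : t = n-1 := by omega
        subst htn
        have h1 := An_row n v hv (by omega)
        have h2 := FS_row n v hv (n-1) (by omega)
        linarith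
    | succ d ih =>
        intro t ht hd
        have ht1 : t + 1 < n := by omega
        have ihh := ih (t+1) ht1 (by omega)
        have hA := Amid_row n v hv (t+1) (by omega) ht1
        have hES := ES_row n v hv (t+1) ht1
        have hFS := FS_row n v hv t (by omega)
        have hsub : (t+1) - 1 = t := rfl
        rw [hsub] at hA
        linarith
  intro t ht
  exact main (n-1-t) t ht rfl

private lemma W_val (n : ℕ) (κ : Fin (6*n) → ℝ) (x : Fin (3*n+3) → ℝ)
    (r : ℕ) (h : r < 6*n) :
    W n (fun r => κ r * Phi n x r) r = κ ⟨r, h⟩ * Phi n x ⟨r, h⟩ := by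
  rw [W_lt n _ r h]

/-- `E1`: kinase–substrate complex balance at site `t` (0-based). -/
private lemma site_eq1 (n : ℕ) (κ : Fin (6*n) → ℝ) (x : Fin (3*n+3) → ℝ)
    (hs : isSteady n κ x) (t : ℕ) (ht : t < n)
    (c0 c1 c2 j1 j3 : ℕ) (h0 : c0 = 6*t) (h1 : c1 = 6*t+1) (h2 : c2 = 6*t+2)
    (g1 : j1 = 3*t+1) (g3 : j3 = 3*t+3) :
    κ ⟨c0, by omega⟩ * (x ⟨0, by omega⟩ * x ⟨j1, by omega⟩)
      = κ ⟨c1, by omega⟩ * x ⟨j3, by omega⟩ + κ ⟨c2, by omega⟩ * x ⟨j3, by omega⟩ := by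
  subst h0 h1 h2 g1 g3
  have h := ES_row n _ hs t ht
  rw [W_val n κ x (6*t) (by omega), W_val n κ x (6*t+1) (by omega),
      W_val n κ x (6*t+2) (by omega), Phi0 n t ht x, Phi1 n t ht x, Phi2 n t ht x] at h
  linarith

/-- `E2`: phosphatase–substrate complex balance at site `t`. -/
private lemma site_eq2 (n : ℕ) (κ : Fin (6*n) → ℝ) (x : Fin (3*n+3) → ℝ)
    (hs : isSteady n κ x) (t : ℕ) (ht : t < n)
    (c3 c4 c5 j4 j5 : ℕ) (h3 : c3 = 6*t+3) (h4 : c4 = 6*t+4) (h5 : c5 = 6*t+5)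
    (g4 : j4 = 3*t+4) (g5 : j5 = 3*t+5) :
    κ ⟨c3, by omega⟩ * (x ⟨2, by omega⟩ * x ⟨j4, by omega⟩)
      = κ ⟨c4, by omega⟩ * x ⟨j5, by omega⟩ + κ ⟨c5, by omega⟩ * x ⟨j5, by omega⟩ := by
  subst h3 h4 h5 g4 g5
  have h := FS_row n _ hs t ht
  rw [W_val n κ x (6*t+3) (by omega), W_val n κ x (6*t+4) (by omega),
      W_val n κ x (6*t+5) (by omega), Phi3 n t ht x, Phi4 n t ht x, Phi5 n t ht x] at h
  linarith

/-- `E3`: zero net flux through site `t`. -/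
private lemma site_eq3 (n : ℕ) (κ : Fin (6*n) → ℝ) (x : Fin (3*n+3) → ℝ)
    (hs : isSteady n κ x) (t : ℕ) (ht : t < n)
    (c2 c5 j3 j5 : ℕ) (h2 : c2 = 6*t+2) (h5 : c5 = 6*t+5)
    (g3 : j3 = 3*t+3) (g5 : j5 = 3*t+5) :
    κ ⟨c2, by omega⟩ * x ⟨j3, by omega⟩ = κ ⟨c5, by omega⟩ * x ⟨j5, by omega⟩ := by
  subst h2 h5 g3 g5
  have h := flux_zero n _ hs t ht
  rw [W_val n κ x (6*t+2) (by omega), W_val n κ x (6*t+5) (by omega),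
      Phi2 n t ht x, Phi5 n t ht x] at h
  linarith

/-- Key monomial relation at site `t`. -/
private lemma site_K (n : ℕ) (κ : Fin (6*n) → ℝ) (x : Fin (3*n+3) → ℝ)
    (hs : isSteady n κ x) (t : ℕ) (ht : t < n)
    (c0 c1 c2 c3 c4 c5 j1 j4 : ℕ)
    (h0 : c0 = 6*t) (h1 : c1 = 6*t+1) (h2 : c2 = 6*t+2) (h3 : c3 = 6*t+3)
    (h4 : c4 = 6*t+4) (h5 : c5 = 6*t+5) (g1 : j1 = 3*t+1) (g4 : j4 = 3*t+4) :
    (κ ⟨c0, by omega⟩ * κ ⟨c2, by omega⟩ * (κ ⟨c4, by omega⟩ + κ ⟨c5, by omega⟩))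
        * (x ⟨0, by omega⟩ * x ⟨j1, by omega⟩)
      = (κ ⟨c3, by omega⟩ * κ ⟨c5, by omega⟩ * (κ ⟨c1, by omega⟩ + κ ⟨c2, by omega⟩))
        * (x ⟨2, by omega⟩ * x ⟨j4, by omega⟩) := by
  subst h0 h1 h2 h3 h4 h5 g1 g4
  have e1 := site_eq1 n κ x hs t ht (6*t) (6*t+1) (6*t+2) (3*t+1) (3*t+3) rfl rfl rfl rfl rfl
  have e2 := site_eq2 n κ x hs t ht (6*t+3) (6*t+4) (6*t+5) (3*t+4) (3*t+5) rfl rfl rfl rfl rfl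
  have e3 := site_eq3 n κ x hs t ht (6*t+2) (6*t+5) (3*t+3) (3*t+5) rfl rfl rfl rfl
  linear_combination (κ ⟨6*t+2, by omega⟩ * (κ ⟨6*t+4, by omega⟩ + κ ⟨6*t+5, by omega⟩)) * e1
    + ((κ ⟨6*t+1, by omega⟩ + κ ⟨6*t+2, by omega⟩) * (κ ⟨6*t+4, by omega⟩ + κ ⟨6*t+5, by omega⟩)) * e3
    - (κ ⟨6*t+5, by omega⟩ * (κ ⟨6*t+1, by omega⟩ + κ ⟨6*t+2, by omega⟩)) * e2

private lemma M2a_abstract (κ0t κ1t κ2t κ0s κ1s κ2s KA KB x0 x2 p1 p2 X3 X0 : ℝ)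
    (E1t : κ0t * (x0 * p1) = κ1t * X3 + κ2t * X3)
    (E1s : κ0s * (x0 * p2) = κ1s * X0 + κ2s * X0)
    (K : KA * (x0 * p2) = KB * (x2 * p1)) :
    (κ0t * KA * (κ1s + κ2s)) * (x0 * X0) = ((κ1t + κ2t) * KB * κ0s) * (x2 * X3) := by
  linear_combination (KB*κ0s*x2)*E1t + (κ0t*κ0s*x0)*K - (κ0t*KA*x0)*E1s

private lemma M2b_abstract (κ3t κ4t κ5t κ3s κ4s κ5s KA KB x0 x2 q4 q1 Y5 Y2 : ℝ)
    (E2t : κ3t * (x2 * q4) = κ4t * Y5 + κ5t * Y5)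
    (E2s : κ3s * (x2 * q1) = κ4s * Y2 + κ5s * Y2)
    (K : KA * (x0 * q1) = KB * (x2 * q4)) :
    (κ3t * KA * (κ4s + κ5s)) * (x0 * Y2) = ((κ4t + κ5t) * KB * κ3s) * (x2 * Y5) := by
  linear_combination (KB*κ3s*x2)*E2t + (κ3t*κ3s*x2)*K - (κ3t*KA*x0)*E2s

private lemma ratio_lemma (P Q a0 a2 u v b0 b2 s w : ℝ)
    (hQ : Q ≠ 0) (ha0 : a0 ≠ 0) (ha2 : a2 ≠ 0) (hu : u ≠ 0)
    (hb2 : b2 ≠ 0) (hs : s ≠ 0)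
    (hKa : P * (a0 * u) = Q * (a2 * v))
    (hKb : P * (b0 * s) = Q * (b2 * w)) :
    w / s = ((b0 / a0) / (b2 / a2)) * (v / u) := by
  have key : Q * (w * (a0 * b2 * u)) = Q * (b0 * a2 * v * s) := by
    linear_combination (b0 * s) * hKa - (a0 * u) * hKb
  have key2 : w * (a0 * b2 * u) = b0 * a2 * v * s := mul_left_cancel₀ hQ key
  field_simp
  linear_combination key2

private lemma av_eq (n : ℕ) (x : Fin (3*n+3) → ℝ) (j k : ℕ)
    (h : k < 3*n+3) (hjk : j = k+1) :
    av n x j = x ⟨k, h⟩ := by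
  subst hjk
  simp only [av, Nat.add_sub_cancel]
  exact dif_pos h

/-- (Collinearity of relative steady states.) For two positive
steady states `a, b` with `Z(b−a) = 0` and `ξ = (b₁/a₁)/(b₃/a₃)`, one has
`b_{3i+2}/b_{3i−1} = ξ·a_{3i+2}/a_{3i−1}` for `i = 1,…,n`, and
`b_{3i+1}/b_{3i−2} = ξ·a_{3i+1}/a_{3i−2}`, `b_{3i+3}/b_{3i} = ξ·a_{3i+3}/a_{3i}`
for `i = 2,…,n`; in particular the `n` points
`(a_{3i+2}/a_{3i−1}, b_{3i+2}/b_{3i−1})` lie on the line through the origin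
with slope `ξ`. -/
theorem collinearity_of_relative_steady_states (n : ℕ) (hn : 2 ≤ n)
    (κ : Fin (6*n) → ℝ) (hκ : ∀ r, 0 < κ r)
    (a b : Fin (3*n+3) → ℝ) (ha : ∀ j, 0 < a j) (hb : ∀ j, 0 < b j)
    (hsa : isSteady n κ a) (hsb : isSteady n κ b)
    (hZ : (Zmat n).mulVec (b - a) = 0)
    (ξ : ℝ) (hξ : ξ = (av n b 1 / av n a 1) / (av n b 3 / av n a 3)) :
    (∀ i : ℕ, 1 ≤ i → i ≤ n →
      av n b (3*i+2) / av n b (3*i-1) = ξ * (av n a (3*i+2) / av n a (3*i-1))) ∧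
    (∀ i : ℕ, 2 ≤ i → i ≤ n →
      av n b (3*i+1) / av n b (3*i-2) = ξ * (av n a (3*i+1) / av n a (3*i-2)) ∧
      av n b (3*i+3) / av n b (3*i) = ξ * (av n a (3*i+3) / av n a (3*i))) ∧
    (∀ i : ℕ, 1 ≤ i → i ≤ n →
      av n b (3*i+2) / av n b (3*i-1) = ξ * (av n a (3*i+2) / av n a (3*i-1))) := by
  subst hξ
  rw [av_eq n b 1 0 (by omega) rfl, av_eq n a 1 0 (by omega) rfl,
      av_eq n b 3 2 (by omega) rfl, av_eq n a 3 2 (by omega) rfl]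
  have G1 : ∀ i : ℕ, 1 ≤ i → i ≤ n →
      av n b (3*i+2) / av n b (3*i-1)
        = ((b ⟨0, by omega⟩ / a ⟨0, by omega⟩) / (b ⟨2, by omega⟩ / a ⟨2, by omega⟩))
          * (av n a (3*i+2) / av n a (3*i-1)) := by
    intro i hi1 hi2
    obtain ⟨t, rfl⟩ : ∃ t, i = t+1 := ⟨i-1, by omega⟩
    have ht : t < n := by omega
    rw [av_eq n b (3*(t+1)+2) (3*t+4) (by omega) (by omega),
        av_eq n b (3*(t+1)-1) (3*t+1) (by omega) (by omega),
        av_eq n a (3*(t+1)+2) (3*t+4) (by omega) (by omega),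
        av_eq n a (3*(t+1)-1) (3*t+1) (by omega) (by omega)]
    refine ratio_lemma _ _ _ _ _ _ _ _ _ _
      ?_ (ha _).ne' (ha _).ne' (ha _).ne' (hb _).ne' (hb _).ne'
      (site_K n κ a hsa t ht (6*t) (6*t+1) (6*t+2) (6*t+3) (6*t+4) (6*t+5)
        (3*t+1) (3*t+4) rfl rfl rfl rfl rfl rfl rfl rfl)
      (site_K n κ b hsb t ht (6*t) (6*t+1) (6*t+2) (6*t+3) (6*t+4) (6*t+5)
        (3*t+1) (3*t+4) rfl rfl rfl rfl rfl rfl rfl rfl)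
    exact (mul_pos (mul_pos (hκ _) (hκ _)) (add_pos (hκ _) (hκ _))).ne'
  refine ⟨G1, ?_, G1⟩
  intro i hi2 hin
  obtain ⟨s, rfl⟩ : ∃ s, i = s+2 := ⟨i-2, by omega⟩
  have hs1 : s+1 < n := by omega
  have hs0 : s < n := by omega
  constructor
  · rw [av_eq n b (3*(s+2)+1) (3*s+6) (by omega) (by omega),
        av_eq n b (3*(s+2)-2) (3*s+3) (by omega) (by omega),
        av_eq n a (3*(s+2)+1) (3*s+6) (by omega) (by omega),
        av_eq n a (3*(s+2)-2) (3*s+3) (by omega) (by omega)]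
    have Ma := M2a_abstract _ _ _ _ _ _ _ _ _ _ _ _ _ _
      (site_eq1 n κ a hsa (s+1) hs1 (6*s+6) (6*s+7) (6*s+8) (3*s+4) (3*s+6)
        (by omega) (by omega) (by omega) (by omega) (by omega))
      (site_eq1 n κ a hsa s hs0 (6*s) (6*s+1) (6*s+2) (3*s+1) (3*s+3) rfl rfl rfl rfl rfl)
      (site_K n κ a hsa s hs0 (6*s) (6*s+1) (6*s+2) (6*s+3) (6*s+4) (6*s+5)
        (3*s+1) (3*s+4) rfl rfl rfl rfl rfl rfl rfl rfl)
    have Mb := M2a_abstract _ _ _ _ _ _ _ _ _ _ _ _ _ _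
      (site_eq1 n κ b hsb (s+1) hs1 (6*s+6) (6*s+7) (6*s+8) (3*s+4) (3*s+6)
        (by omega) (by omega) (by omega) (by omega) (by omega))
      (site_eq1 n κ b hsb s hs0 (6*s) (6*s+1) (6*s+2) (3*s+1) (3*s+3) rfl rfl rfl rfl rfl)
      (site_K n κ b hsb s hs0 (6*s) (6*s+1) (6*s+2) (6*s+3) (6*s+4) (6*s+5)
        (3*s+1) (3*s+4) rfl rfl rfl rfl rfl rfl rfl rfl)
    refine ratio_lemma _ _ _ _ _ _ _ _ _ _
      ?_ (ha _).ne' (ha _).ne' (ha _).ne' (hb _).ne' (hb _).ne' Ma Mb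
    exact (mul_pos (mul_pos (add_pos (hκ _) (hκ _))
      (mul_pos (mul_pos (hκ _) (hκ _)) (add_pos (hκ _) (hκ _)))) (hκ _)).ne'
  · rw [av_eq n b (3*(s+2)+3) (3*s+8) (by omega) (by omega),
        av_eq n b (3*(s+2)) (3*s+5) (by omega) (by omega),
        av_eq n a (3*(s+2)+3) (3*s+8) (by omega) (by omega),
        av_eq n a (3*(s+2)) (3*s+5) (by omega) (by omega)]
    have Ma := M2b_abstract _ _ _ _ _ _ _ _ _ _ _ _ _ _
      (site_eq2 n κ a hsa (s+1) hs1 (6*s+9) (6*s+10) (6*s+11) (3*s+7) (3*s+8)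
        (by omega) (by omega) (by omega) (by omega) (by omega))
      (site_eq2 n κ a hsa s hs0 (6*s+3) (6*s+4) (6*s+5) (3*s+4) (3*s+5) rfl rfl rfl rfl rfl)
      (site_K n κ a hsa (s+1) hs1 (6*s+6) (6*s+7) (6*s+8) (6*s+9) (6*s+10) (6*s+11)
        (3*s+4) (3*s+7) (by omega) (by omega) (by omega) (by omega) (by omega) (by omega)
        (by omega) (by omega))
    have Mb := M2b_abstract _ _ _ _ _ _ _ _ _ _ _ _ _ _
      (site_eq2 n κ b hsb (s+1) hs1 (6*s+9) (6*s+10) (6*s+11) (3*s+7) (3*s+8)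
        (by omega) (by omega) (by omega) (by omega) (by omega))
      (site_eq2 n κ b hsb s hs0 (6*s+3) (6*s+4) (6*s+5) (3*s+4) (3*s+5) rfl rfl rfl rfl rfl)
      (site_K n κ b hsb (s+1) hs1 (6*s+6) (6*s+7) (6*s+8) (6*s+9) (6*s+10) (6*s+11)
        (3*s+4) (3*s+7) (by omega) (by omega) (by omega) (by omega) (by omega) (by omega)
        (by omega) (by omega))
    refine ratio_lemma _ _ _ _ _ _ _ _ _ _
      ?_ (ha _).ne' (ha _).ne' (ha _).ne' (hb _).ne' (hb _).ne' Ma Mb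
    exact (mul_pos (mul_pos (add_pos (hκ _) (hκ _))
      (mul_pos (mul_pos (hκ _) (hκ _)) (add_pos (hκ _) (hκ _)))) (hκ _)).ne'

end Phos
end
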